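/- arXiv:0712.3778 — 4 statements merged into one kernel-verified Lean document; each statement's English description precedes it below -/
import Mathlib

section
/- The function u1(h) = u0 - sqrt(g/2)(h - h0) sqrt(1/h + 1/h0) is strictly decreasing and strictly convex on (0, ∞). -/
/-!
Write `u₁ = u₀ - √(g/2) φ` with `φ h = (h - h₀) q h` and `q h = √(1/h + 1/h₀)`. Everything follows
from the identity `q² h h₀ = h + h₀`: it turns the derivatives into
`φ' h = (2h² + h₀h + h₀²) / (2h₀h² q)` and `φ'' h = -(5h + 3h₀) / (4h⁴q³)`, whose signs are evident.
-/

open Real Set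

theorem strictConvexOn_of_hasDerivAt2_pos {D : Set ℝ} (hD : Convex ℝ D) {f f' f'' : ℝ → ℝ}
    (hf : ∀ x ∈ D, HasDerivAt f (f' x) x) (hf' : ∀ x ∈ D, HasDerivAt f' (f'' x) x)
    (hf'' : ∀ x ∈ D, 0 < f'' x) : StrictConvexOn ℝ D f := by
  have hmono : StrictMonoOn f' D :=
    strictMonoOn_of_hasDerivWithinAt_pos hD (fun x hx => (hf' x hx).continuousAt.continuousWithinAt)
      (fun x hx => (hf' x (interior_subset hx)).hasDerivWithinAt)
      fun x hx => hf'' x (interior_subset hx)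
  exact StrictMonoOn.strictConvexOn_of_deriv hD
    (fun x hx => (hf x hx).continuousAt.continuousWithinAt)
    ((hmono.mono interior_subset).congr fun x hx => ((hf x (interior_subset hx)).deriv).symm)

namespace ShockCurve

noncomputable def factor (h0 h : ℝ) : ℝ := (h - h0) * √(1 / h + 1 / h0)

noncomputable def factorDeriv (h0 h : ℝ) : ℝ :=
  (2 * h ^ 2 + h0 * h + h0 ^ 2) / (2 * h0 * h ^ 2 * √(1 / h + 1 / h0))

variable {h0 x : ℝ}

lemma sq_sqrt_one_div_add_one_div_mul (hh0 : 0 < h0) (hx : 0 < x) :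
    √(1 / x + 1 / h0) ^ 2 * (x * h0) = x + h0 := by
  rw [sq_sqrt (by positivity)]
  field_simp
  ring

lemma hasDerivAt_sqrt_one_div_add_one_div (hh0 : 0 < h0) (hx : 0 < x) :
    HasDerivAt (fun y => √(1 / y + 1 / h0)) (-1 / (2 * x ^ 2 * √(1 / x + 1 / h0))) x := by
  have hinv : HasDerivAt (fun y => 1 / y + 1 / h0) (-1 / x ^ 2) x := by
    simpa [one_div, neg_div] using (hasDerivAt_inv hx.ne').add_const h0⁻¹
  convert hinv.sqrt (by positivity) using 1
  field_simp

lemma hasDerivAt_factor (hh0 : 0 < h0) (hx : 0 < x) :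
    HasDerivAt (factor h0) (factorDeriv h0 x) x := by
  have hq := sq_sqrt_one_div_add_one_div_mul hh0 hx
  have hq0 : 0 < √(1 / x + 1 / h0) := sqrt_pos.2 (by positivity)
  refine (((hasDerivAt_id x).sub_const h0).mul
    (hasDerivAt_sqrt_one_div_add_one_div hh0 hx)).congr_deriv ?_
  unfold factorDeriv
  set q := √(1 / x + 1 / h0)
  simp only [id]
  field_simp
  linear_combination (2 * x) * hq

lemma factorDeriv_pos (hh0 : 0 < h0) (hx : 0 < x) : 0 < factorDeriv h0 x := by
  unfold factorDeriv
  positivity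

lemma hasDerivAt_factorDeriv (hh0 : 0 < h0) (hx : 0 < x) :
    HasDerivAt (factorDeriv h0)
      (-((5 * x + 3 * h0) / (4 * x ^ 4 * √(1 / x + 1 / h0) ^ 3))) x := by
  have hq := sq_sqrt_one_div_add_one_div_mul hh0 hx
  have hq0 : 0 < √(1 / x + 1 / h0) := sqrt_pos.2 (by positivity)
  have hnum : HasDerivAt (fun y => 2 * y ^ 2 + h0 * y + h0 ^ 2) (4 * x + h0) x := by
    refine ((((hasDerivAt_pow 2 x).const_mul 2).fun_add
      ((hasDerivAt_id' x).const_mul h0)).add_const (h0 ^ 2)).congr_deriv ?_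
    norm_num
    ring
  have hden := ((hasDerivAt_pow 2 x).const_mul (2 * h0)).fun_mul
    (hasDerivAt_sqrt_one_div_add_one_div hh0 hx)
  refine (hnum.fun_div hden ?_).congr_deriv ?_
  · show 2 * h0 * x ^ 2 * √(1 / x + 1 / h0) ≠ 0
    positivity
  norm_num only
  set q := √(1 / x + 1 / h0)
  field_simp
  linear_combination (-4 * (2 * x + 4 * h0)) * hq

end ShockCurve

open ShockCurve in
theorem shallow_water_shock_curve_monotone_convex (g h0 u0 : ℝ) (hg : 0 < g) (hh0 : 0 < h0) :
    StrictAntiOn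
      (fun h : ℝ => u0 - Real.sqrt (g / 2) * (h - h0) * Real.sqrt (1 / h + 1 / h0))
      (Set.Ioi 0) ∧
    StrictConvexOn ℝ (Set.Ioi 0)
      (fun h : ℝ => u0 - Real.sqrt (g / 2) * (h - h0) * Real.sqrt (1 / h + 1 / h0)) := by
  have hc : 0 < √(g / 2) := sqrt_pos.2 (half_pos hg)
  have hu : (fun h : ℝ => u0 - √(g / 2) * (h - h0) * √(1 / h + 1 / h0)) =
      fun h => u0 - √(g / 2) * factor h0 h := by
    funext h
    rw [factor, mul_assoc]
  have hderiv (x : ℝ) (hx : x ∈ Ioi 0) :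
      HasDerivAt (fun h => u0 - √(g / 2) * factor h0 h) (-(√(g / 2) * factorDeriv h0 x)) x :=
    ((hasDerivAt_factor hh0 hx).const_mul _).const_sub u0
  rw [hu]
  constructor
  · refine strictAntiOn_of_hasDerivWithinAt_neg (f' := fun x => -(√(g / 2) * factorDeriv h0 x))
      (convex_Ioi 0) (fun x hx => (hderiv x hx).continuousAt.continuousWithinAt)
      (fun x hx => (hderiv x (interior_subset hx)).hasDerivWithinAt) fun x hx => ?_
    exact neg_neg_of_pos (mul_pos hc (factorDeriv_pos hh0 (interior_subset hx)))
  · refine strictConvexOn_of_hasDerivAt2_pos (convex_Ioi 0) hderiv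
      (fun x hx => ((hasDerivAt_factorDeriv hh0 hx).const_mul _).neg) fun x (hx : 0 < x) => ?_
    rw [mul_neg, neg_neg]
    exact mul_pos hc (by positivity)
end

section
/- With φ and h_min as above, if a ≥ a_min where a_min = a0 + (u0^2/(2g))(h0^2/h_min^2 - 1) + h_min - h0, then φ has at least one root h* in (0, h_min] and at least one root h** in [h_min, ∞); moreover if a > a_min then φ(h_min) < 0 and both roots satisfy the strict inequalities h* < h_min < h**. -/
theorem shallow_water_phi_roots (g h0 u0 a0 a : ℝ)
    (hg : 0 < g) (hh0 : 0 < h0) (hu0 : u0 ≠ 0) :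
    let φ : ℝ → ℝ := fun h =>
      a0 - a + u0 ^ 2 / (2 * g) * (h0 ^ 2 / h ^ 2 - 1) + h - h0
    let hmin : ℝ := (u0 ^ 2 * h0 ^ 2 / g) ^ ((1 : ℝ) / 3)
    let amin : ℝ := a0 + u0 ^ 2 / (2 * g) * (h0 ^ 2 / hmin ^ 2 - 1) + hmin - h0
    (a ≥ amin →
      (∃ hs ∈ Set.Ioc (0 : ℝ) hmin, φ hs = 0) ∧ (∃ hss ∈ Set.Ici hmin, φ hss = 0)) ∧
    (a > amin →
      φ hmin < 0 ∧ (∃ hs ∈ Set.Ioo (0 : ℝ) hmin, φ hs = 0) ∧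
        (∃ hss ∈ Set.Ioi hmin, φ hss = 0)) := by
  intro φ hmin amin
  have hu2 : 0 < u0 ^ 2 := by positivity
  have hmin_pos : 0 < hmin := Real.rpow_pos_of_pos (by positivity) _
  have hφmin : φ hmin = amin - a := by simp only [φ, amin]; ring
  -- continuity
  have contφ : ContinuousOn φ {x : ℝ | x ≠ 0} := by
    apply ContinuousOn.sub _ continuousOn_const
    apply ContinuousOn.add _ continuousOn_id
    apply continuousOn_const.add
    apply continuousOn_const.mul
    apply ContinuousOn.sub _ continuousOn_const
    exact ContinuousOn.div continuousOn_const (by fun_prop)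
      (fun x hx => pow_ne_zero 2 hx)
  -- set constants
  set K : ℝ := u0 ^ 2 * h0 ^ 2 / (2 * g) with hK
  have hKpos : 0 < K := by positivity
  set C : ℝ := a - a0 + u0 ^ 2 / (2 * g) + h0 with hC
  set D : ℝ := max C 1 with hD
  have hD1 : (1:ℝ) ≤ D := le_max_right _ _
  have hDpos : 0 < D := lt_of_lt_of_le one_pos hD1
  set ε : ℝ := min hmin (K / (D * hmin)) with hε
  have hεpos : 0 < ε := lt_min hmin_pos (by positivity)
  have hεle : ε ≤ hmin := min_le_left _ _
  have hφε : 0 ≤ φ ε := by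
    have h1 : ε ≤ K / (D * hmin) := min_le_right _ _
    have h2 : ε ^ 2 ≤ K / D := by
      have : ε * ε ≤ (K / (D * hmin)) * hmin := by
        apply mul_le_mul h1 hεle (le_of_lt hεpos) (by positivity)
      calc ε ^ 2 = ε * ε := sq ε
        _ ≤ (K / (D * hmin)) * hmin := this
        _ = K / D := by field_simp
    have h3 : D ≤ K / ε ^ 2 := by
      rw [le_div_iff₀ (by positivity : (0:ℝ) < ε ^ 2)]
      rw [le_div_iff₀ hDpos] at h2
      calc D * ε ^ 2 = ε ^ 2 * D := by ring
        _ ≤ K := h2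
    have h4 : C ≤ K / ε ^ 2 := le_trans (le_max_left _ _) h3
    have : φ ε = K / ε ^ 2 - C + ε := by
      simp only [φ, hK, hC]
      field_simp
      ring
    rw [this]; linarith
  set H : ℝ := max hmin C with hH
  have hHge : hmin ≤ H := le_max_left _ _
  have hHpos : 0 < H := lt_of_lt_of_le hmin_pos hHge
  have hφH : 0 ≤ φ H := by
    have h4 : C ≤ H := le_max_right _ _
    clear_value H
    have h5 : 0 ≤ K / H ^ 2 := by positivity
    have : φ H = K / H ^ 2 - C + H := by
      simp only [φ, hK, hC]; field_simp; ring
    rw [this]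
    calc (0:ℝ) ≤ K / H ^ 2 + (H - C) := add_nonneg h5 (sub_nonneg.mpr h4)
      _ = K / H ^ 2 - C + H := by ring
  -- roots given φ hmin ≤ 0
  have main : φ hmin ≤ 0 → (∃ hs ∈ Set.Icc ε hmin, φ hs = 0) ∧
      (∃ hss ∈ Set.Icc hmin H, φ hss = 0) := by
    intro hle
    constructor
    · have sub : Set.Icc ε hmin ⊆ {x : ℝ | x ≠ 0} := by
        intro x hx; exact ne_of_gt (lt_of_lt_of_le hεpos hx.1)
      have := intermediate_value_Icc' hεle (contφ.mono sub)
      have h0mem : (0:ℝ) ∈ Set.Icc (φ hmin) (φ ε) := ⟨hle, hφε⟩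
      obtain ⟨x, hx, hxv⟩ := this h0mem
      exact ⟨x, hx, hxv⟩
    · have sub : Set.Icc hmin H ⊆ {x : ℝ | x ≠ 0} := by
        intro x hx; exact ne_of_gt (lt_of_lt_of_le hmin_pos hx.1)
      have := intermediate_value_Icc hHge (contφ.mono sub)
      have h0mem : (0:ℝ) ∈ Set.Icc (φ hmin) (φ H) := ⟨hle, hφH⟩
      obtain ⟨x, hx, hxv⟩ := this h0mem
      exact ⟨x, hx, hxv⟩
  constructor
  · intro hge
    have hle : φ hmin ≤ 0 := by rw [hφmin]; linarith
    obtain ⟨⟨x, hx, hxv⟩, ⟨y, hy, hyv⟩⟩ := main hle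
    exact ⟨⟨x, ⟨lt_of_lt_of_le hεpos hx.1, hx.2⟩, hxv⟩, ⟨y, hy.1, hyv⟩⟩
  · intro hgt
    have hlt : φ hmin < 0 := by rw [hφmin]; linarith
    obtain ⟨⟨x, hx, hxv⟩, ⟨y, hy, hyv⟩⟩ := main (le_of_lt hlt)
    refine ⟨hlt, ⟨x, ⟨lt_of_lt_of_le hεpos hx.1, lt_of_le_of_ne hx.2 ?_⟩, hxv⟩,
      ⟨y, lt_of_le_of_ne hy.1 ?_, hyv⟩⟩
    · intro h; rw [h] at hxv; linarith
    · intro h; rw [← h] at hyv; linarith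
end

section
/- Suppose g, h0 > 0, u0 ≠ 0, and a < a0. Then φ(h0) = a0 - a > 0. Consequently, if u0^2 > g h0 (so h0 < h_min), then the smaller root satisfies h0 < h*, while if u0^2 < g h0 (so h0 > h_min), then the larger root satisfies h** < h0. -/
/-! With `A = a0 - a > 0` and `c = u0² / (2g)`, `φ` is `residual A c h0`. Clearing
denominators, a nonzero root `h` satisfies `A h² = (h - h0) (c (h0 + h) - h²)`, so `h - h0` and
`c (h0 + h) - h²` have the same strict sign. In the supercritical case `h0 < 2c`, every
`0 < h ≤ h0` has `h² < c (h0 + h)`; in the subcritical case `2c < h0`, every `h ≥ h0` has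
`c (h0 + h) < h²`. Either way the root lies on the far side of `h0`. -/

namespace ShallowWater

noncomputable def residual (A c h0 h : ℝ) : ℝ :=
  A + c * (h0 ^ 2 / h ^ 2 - 1) + h - h0

lemma residual_self (A c : ℝ) {h0 : ℝ} (hh0 : h0 ≠ 0) : residual A c h0 h0 = A := by
  simp [residual, hh0]

lemma sq_mul_residual (A c h0 : ℝ) {h : ℝ} (hh : h ≠ 0) :
    h ^ 2 * residual A c h0 h = A * h ^ 2 - (h - h0) * (c * (h0 + h) - h ^ 2) := by
  unfold residual
  field_simp
  ring

lemma sub_mul_pos_of_residual_eq_zero {A c h0 h : ℝ} (hA : 0 < A) (hh : h ≠ 0)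
    (hroot : residual A c h0 h = 0) :
    0 < (h - h0) * (c * (h0 + h) - h ^ 2) := by
  have key := sq_mul_residual A c h0 hh
  rw [hroot, mul_zero] at key
  have : 0 < A * h ^ 2 := by positivity
  linarith

lemma sq_lt_mul_add_of_le {c h0 h : ℝ} (hc : h0 < 2 * c) (hpos : 0 < h) (hle : h ≤ h0) :
    h ^ 2 < c * (h0 + h) := by
  nlinarith

lemma mul_add_lt_sq_of_le {c h0 h : ℝ} (hc : 2 * c < h0) (hh0 : 0 < h0) (hle : h0 ≤ h) :
    c * (h0 + h) < h ^ 2 := by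
  nlinarith

end ShallowWater

open ShallowWater in
theorem shallow_water_roots_same_side_general (g h0 u0 a0 a : ℝ)
    (hg : 0 < g) (hh0 : 0 < h0) (ha : a < a0) :
    let φ : ℝ → ℝ := fun h =>
      a0 - a + u0 ^ 2 / (2 * g) * (h0 ^ 2 / h ^ 2 - 1) + h - h0
    let hmin : ℝ := (u0 ^ 2 * h0 ^ 2 / g) ^ ((1 : ℝ) / 3)
    φ h0 = a0 - a ∧ φ h0 > 0 ∧
    (u0 ^ 2 > g * h0 → ∀ hs : ℝ, 0 < hs → hs ≤ hmin → φ hs = 0 → h0 < hs) ∧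
    (u0 ^ 2 < g * h0 → ∀ hss : ℝ, hmin ≤ hss → φ hss = 0 → hss < h0) := by
  intro φ hmin
  have hA : 0 < a0 - a := sub_pos.2 ha
  have hφ0 : φ h0 = a0 - a := residual_self _ _ hh0.ne'
  have two_c : 2 * (u0 ^ 2 / (2 * g)) = u0 ^ 2 / g := by field_simp
  refine ⟨hφ0, hφ0 ▸ hA, fun hsuper hs hs0 _ hroot => ?_, fun hsub hss _ hroot => ?_⟩
  · have hc : h0 < 2 * (u0 ^ 2 / (2 * g)) := by rw [two_c, lt_div_iff₀ hg]; linarith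
    by_contra! hle
    have hbracket := sq_lt_mul_add_of_le hc hs0 hle
    exact (sub_mul_pos_of_residual_eq_zero hA hs0.ne' hroot).not_ge
      (mul_nonpos_of_nonpos_of_nonneg (sub_nonpos.2 hle) (sub_pos.2 hbracket).le)
  · have hc : 2 * (u0 ^ 2 / (2 * g)) < h0 := by rw [two_c, div_lt_iff₀ hg]; linarith
    by_contra! hle
    have hbracket := mul_add_lt_sq_of_le hc hh0 hle
    exact (sub_mul_pos_of_residual_eq_zero hA (hh0.trans_le hle).ne' hroot).not_ge
      (mul_nonpos_of_nonneg_of_nonpos (sub_nonneg.2 hle) (sub_neg.2 hbracket).le)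

theorem shallow_water_roots_same_side (g h0 u0 a0 a : ℝ)
    (hg : 0 < g) (hh0 : 0 < h0) (hu0 : u0 ≠ 0) (ha : a < a0) :
    let φ : ℝ → ℝ := fun h =>
      a0 - a + u0 ^ 2 / (2 * g) * (h0 ^ 2 / h ^ 2 - 1) + h - h0
    let hmin : ℝ := (u0 ^ 2 * h0 ^ 2 / g) ^ ((1 : ℝ) / 3)
    φ h0 = a0 - a ∧ φ h0 > 0 ∧
    (u0 ^ 2 > g * h0 → ∀ hs : ℝ, 0 < hs → hs ≤ hmin → φ hs = 0 → h0 < hs) ∧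
    (u0 ^ 2 < g * h0 → ∀ hss : ℝ, hmin ≤ hss → φ hss = 0 → hss < h0) :=
  shallow_water_roots_same_side_general g h0 u0 a0 a hg hh0 ha
end

section
/- If u0 ≠ 0 and u0^2 ≠ g h0 (with g, h0 > 0), then a_min = a0 + (u0^2/(2g))(h0^2/h_min^2 - 1) + h_min - h0 < a0, where h_min = (u0^2 h0^2/g)^{1/3}; and if u0^2 = g h0 then a_min = a0. -/
theorem shallow_water_amin_below_a0 (g h0 u0 a0 : ℝ)
    (hg : 0 < g) (hh0 : 0 < h0) (hu0 : u0 ≠ 0) :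
    let hmin : ℝ := (u0 ^ 2 * h0 ^ 2 / g) ^ ((1 : ℝ) / 3)
    let amin : ℝ := a0 + u0 ^ 2 / (2 * g) * (h0 ^ 2 / hmin ^ 2 - 1) + hmin - h0
    (u0 ^ 2 ≠ g * h0 → amin < a0) ∧ (u0 ^ 2 = g * h0 → amin = a0) := by
  intro hmin amin
  have hgne : g ≠ 0 := ne_of_gt hg
  have hh0ne : h0 ≠ 0 := ne_of_gt hh0
  have hu2 : 0 < u0 ^ 2 := by positivity
  have hbase : (0:ℝ) < u0 ^ 2 * h0 ^ 2 / g := by positivity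
  have hspos : 0 < hmin := Real.rpow_pos_of_pos hbase _
  have hsne : hmin ≠ 0 := ne_of_gt hspos
  have hcube : hmin ^ 3 = u0 ^ 2 * h0 ^ 2 / g := by
    show ((u0 ^ 2 * h0 ^ 2 / g) ^ ((1:ℝ)/3)) ^ 3 = _
    rw [← Real.rpow_natCast ((u0 ^ 2 * h0 ^ 2 / g) ^ ((1:ℝ)/3)) 3,
        ← Real.rpow_mul hbase.le]
    norm_num
  have hcube' : u0 ^ 2 * h0 ^ 2 = hmin ^ 3 * g := by
    field_simp at hcube
    linarith
  have key : amin - a0 = -((hmin - h0) ^ 2 * (hmin + 2 * h0)) / (2 * h0 ^ 2) := by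
    have h1 : amin = a0 + u0 ^ 2 / (2 * g) * (h0 ^ 2 / hmin ^ 2 - 1) + hmin - h0 := rfl
    rw [h1]
    field_simp
    nlinarith [hcube', sq_nonneg hmin, hspos]
  constructor
  · intro hne
    have hsneq : hmin ≠ h0 := by
      intro h
      apply hne
      rw [h] at hcube'
      have : h0 ^ 2 * u0 ^ 2 = h0 ^ 2 * (g * h0) := by ring_nf; ring_nf at hcube'; linarith
      exact mul_left_cancel₀ (by positivity) this
    have h2 : 0 < (hmin - h0) ^ 2 := by
      have hne2 : hmin - h0 ≠ 0 := sub_ne_zero.mpr hsneq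
      positivity
    have h3 : 0 < hmin + 2 * h0 := by linarith
    have : amin - a0 < 0 := by
      rw [key]
      apply div_neg_of_neg_of_pos
      · nlinarith
      · positivity
    linarith
  · intro heq
    have hseq : hmin = h0 := by
      have h3 : hmin ^ 3 = h0 ^ 3 := by
        rw [hcube, heq]; field_simp
      nlinarith [sq_nonneg (hmin - h0), sq_nonneg (hmin + h0), hspos, hh0]
    rw [hseq] at key
    simp at key
    linarith
end
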